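/- arXiv:1904.09415 — 6 statements merged into one kernel-verified Lean document; each statement's English description precedes it below -/
import Mathlib

section
/- Let (Ω, 𝓕, P) be a probability space and let Z, Z̃ : Ω → EuclideanSpace ℝ (Fin d) be random vectors in L² (MemLp 2) with means μ₁ = E[Z] and μ₂ = E[Z̃]. Assume E[‖Z − μ₁‖²] = E[‖Z̃ − μ₂‖²] = T and E[⟪Z − μ₁, Z̃ − μ₂⟫] ≤ T. Then ‖μ₁ − μ₂‖² ≤ E[‖Z − Z̃‖²]. Consequently, if in addition (1/2) · E[‖Z − Z̃‖²] ≤ b for some b ≥ 0, then (1/2) · ‖μ₁ − μ₂‖² ≤ b. -/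
/-!
Write `A = Z - μ₁` and `B = Z̃ - μ₂` for the centred vectors. Since `Z - Z̃ = (A - B) + (μ₁ - μ₂)`
and `A - B` has mean zero, the cross term vanishes on integration, so
`E‖Z - Z̃‖² = E‖A‖² + E‖B‖² - 2 E⟪A, B⟫ + ‖μ₁ - μ₂‖² = 2 (T - ζ) + ‖μ₁ - μ₂‖²`,
and `ζ ≤ T` makes the first summand nonnegative.
-/

open MeasureTheory
open scoped RealInnerProductSpace

section

variable {α E : Type*} {m : MeasurableSpace α} {μ : Measure α}
  [NormedAddCommGroup E] [InnerProductSpace ℝ E] {f g : α → E}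

lemma integrable_inner_of_memLp_two (hf : MemLp f 2 μ) (hg : MemLp g 2 μ) :
    Integrable (fun x => ⟪f x, g x⟫) μ :=
  (L2.integrable_inner (𝕜 := ℝ) (hf.toLp f) (hg.toLp g)).congr <| by
    filter_upwards [hf.coeFn_toLp, hg.coeFn_toLp] with x hfx hgx
    rw [hfx, hgx]

lemma integral_norm_sub_sq_of_memLp_two (hf : MemLp f 2 μ) (hg : MemLp g 2 μ) :
    ∫ x, ‖f x - g x‖ ^ 2 ∂μ =
      ∫ x, ‖f x‖ ^ 2 ∂μ + ∫ x, ‖g x‖ ^ 2 ∂μ - 2 * ∫ x, ⟪f x, g x⟫ ∂μ := by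
  have hpoint : ∀ x, ‖f x - g x‖ ^ 2 = ‖f x‖ ^ 2 + ‖g x‖ ^ 2 - 2 * ⟪f x, g x⟫ := fun x => by
    rw [norm_sub_sq_real]; ring
  simp only [hpoint]
  have hf2 : Integrable (fun x => ‖f x‖ ^ 2) μ := hf.integrable_norm_pow two_ne_zero
  have hg2 : Integrable (fun x => ‖g x‖ ^ 2) μ := hg.integrable_norm_pow two_ne_zero
  have hfg2 : Integrable (fun x => ‖f x‖ ^ 2 + ‖g x‖ ^ 2) μ := hf2.add hg2
  rw [integral_sub hfg2 ((integrable_inner_of_memLp_two hf hg).const_mul 2),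
    integral_add hf2 hg2, integral_const_mul]

variable [CompleteSpace E] [IsProbabilityMeasure μ]

lemma integral_sub_integral_eq_zero (hf : Integrable f μ) :
    ∫ x, (f x - ∫ y, f y ∂μ) ∂μ = 0 := by
  rw [integral_sub hf (integrable_const _), integral_const, probReal_univ, one_smul, sub_self]

lemma integral_norm_sq_eq_integral_norm_sub_integral_sq_add (hf : MemLp f 2 μ) :
    ∫ x, ‖f x‖ ^ 2 ∂μ = ∫ x, ‖f x - ∫ y, f y ∂μ‖ ^ 2 ∂μ + ‖∫ y, f y ∂μ‖ ^ 2 := by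
  set c := ∫ y, f y ∂μ
  have hfc : MemLp (fun x => f x - c) 2 μ := hf.sub (memLp_const c)
  have hcross : ∫ x, ⟪f x - c, c⟫ ∂μ = 0 := by
    simp only [real_inner_comm c]
    rw [integral_inner (hfc.integrable one_le_two),
      integral_sub_integral_eq_zero (hf.integrable one_le_two), inner_zero_right]
  have hsplit := integral_norm_sub_sq_of_memLp_two hfc (memLp_const (-c))
  simp only [sub_neg_eq_add, sub_add_cancel, norm_neg, inner_neg_right, integral_neg,
    integral_const, probReal_univ, one_smul, hcross] at hsplit
  rw [hsplit]
  ring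

lemma integral_norm_sub_sq_eq_centered_add_norm_sub_integral_sq (hf : MemLp f 2 μ)
    (hg : MemLp g 2 μ) :
    ∫ x, ‖f x - g x‖ ^ 2 ∂μ =
      ∫ x, ‖f x - ∫ y, f y ∂μ‖ ^ 2 ∂μ + ∫ x, ‖g x - ∫ y, g y ∂μ‖ ^ 2 ∂μ
        - 2 * ∫ x, ⟪f x - ∫ y, f y ∂μ, g x - ∫ y, g y ∂μ⟫ ∂μ
        + ‖∫ y, f y ∂μ - ∫ y, g y ∂μ‖ ^ 2 := by
  have hfg : MemLp (fun x => f x - g x) 2 μ := hf.sub hg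
  rw [integral_norm_sq_eq_integral_norm_sub_integral_sq_add hfg,
    integral_sub (hf.integrable one_le_two) (hg.integrable one_le_two)]
  have hcentre : ∀ x, f x - g x - (∫ y, f y ∂μ - ∫ y, g y ∂μ)
      = (f x - ∫ y, f y ∂μ) - (g x - ∫ y, g y ∂μ) := fun x => by abel
  simp only [hcentre]
  have hf₀ : MemLp (fun x => f x - ∫ y, f y ∂μ) 2 μ := hf.sub (memLp_const _)
  have hg₀ : MemLp (fun x => g x - ∫ y, g y ∂μ) 2 μ := hg.sub (memLp_const _)
  rw [integral_norm_sub_sq_of_memLp_two hf₀ hg₀]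

end

/-- If the cross-covariance trace does not exceed the common covariance trace `T`, then
`‖μ₁ − μ₂‖² ≤ E‖Z − Z̃‖²`; consequently the norm-ball constraint `(1/2)E‖Z − Z̃‖² ≤ b`
implies the mean constraint `(1/2)‖μ₁ − μ₂‖² ≤ b`. -/
theorem sq_dist_means_le_expected_sq_dist {Ω : Type*} [MeasureSpace Ω]
    [IsProbabilityMeasure (volume : Measure Ω)] {d : ℕ}
    (Z Zt : Ω → EuclideanSpace ℝ (Fin d)) (hZ : MemLp Z 2) (hZt : MemLp Zt 2)
    (μ₁ μ₂ : EuclideanSpace ℝ (Fin d)) (hμ₁ : μ₁ = ∫ ω, Z ω) (hμ₂ : μ₂ = ∫ ω, Zt ω)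
    (T : ℝ) (hT₁ : (∫ ω, ‖Z ω - μ₁‖ ^ 2) = T) (hT₂ : (∫ ω, ‖Zt ω - μ₂‖ ^ 2) = T)
    (hζ : (∫ ω, ⟪Z ω - μ₁, Zt ω - μ₂⟫) ≤ T) :
    ‖μ₁ - μ₂‖ ^ 2 ≤ (∫ ω, ‖Z ω - Zt ω‖ ^ 2) ∧
      ∀ b : ℝ, 0 ≤ b → (1 / 2) * (∫ ω, ‖Z ω - Zt ω‖ ^ 2) ≤ b →
        (1 / 2) * ‖μ₁ - μ₂‖ ^ 2 ≤ b := by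
  have hsplit := integral_norm_sub_sq_eq_centered_add_norm_sub_integral_sq hZ hZt
  rw [← hμ₁, ← hμ₂, hT₁, hT₂] at hsplit
  have hmeans : ‖μ₁ - μ₂‖ ^ 2 ≤ ∫ ω, ‖Z ω - Zt ω‖ ^ 2 := by linarith
  exact ⟨hmeans, fun b _ hball => by linarith⟩
end

section
/- Let d be a positive natural number, let μ₁, μ₂ ∈ EuclideanSpace ℝ (Fin d), and let Σ : Matrix (Fin d) (Fin d) ℝ be a symmetric positive definite matrix. Set s = (1/2) · ⟪μ₁ − μ₂, Σ⁻¹.mulVec (μ₁ − μ₂)⟫. Then the χ²-divergence with generator f(t) = (1/2)(t−1)², namely ∫ N(z; μ₁, Σ) · (1/2) · (N(z; μ₂, Σ)/N(z; μ₁, Σ) − 1)² dz (Lebesgue integral over ℝ^d), equals (1/2) · (Real.exp (2·s) − 1). -/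
open MeasureTheory
open scoped RealInnerProductSpace

/-- The multivariate Gaussian density `N(z; μ, Σ)` on `EuclideanSpace ℝ (Fin d)`. -/
noncomputable def gaussPdf {d : ℕ} (μ : EuclideanSpace ℝ (Fin d)) (S : Matrix (Fin d) (Fin d) ℝ)
    (z : EuclideanSpace ℝ (Fin d)) : ℝ :=
  (2 * Real.pi) ^ (-(d : ℝ) / 2) * S.det ^ (-(1 : ℝ) / 2) *
    Real.exp (-(1 / 2) * ⟪z - μ, (WithLp.toLp 2 ((S⁻¹).mulVec (z - μ)) : EuclideanSpace ℝ (Fin d))⟫)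

/-!
Completing the square in the exponent gives
`N(z; μ₂, Σ)² = e^{2s} · N(z; 2μ₂ - μ₁, Σ) · N(z; μ₁, Σ)`. Hence, for `p = N(·; μ₁, Σ)` and
`q = N(·; μ₂, Σ)`, the integrand `p · ½(q/p - 1)² = ½ q²/p - q + ½ p` is a combination of three
Gaussian densities, each of integral `1`. For the normalisation write `Σ⁻¹ = Cᵀ C`: the
substitution `x ↦ C x` gives the standard Gaussian integral, with Jacobian
`|det C|⁻¹ = (det Σ)^{1/2}`.
-/

open Matrix

theorem integral_comp_linearMap_addHaar {E F : Type*} [NormedAddCommGroup E] [NormedSpace ℝ E]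
    [FiniteDimensional ℝ E] [MeasurableSpace E] [BorelSpace E] (μ : Measure E)
    [μ.IsAddHaarMeasure] [NormedAddCommGroup F] [NormedSpace ℝ F] {f : E →ₗ[ℝ] E}
    (hf : LinearMap.det f ≠ 0) (g : E → F) :
    ∫ x, g (f x) ∂μ = |LinearMap.det f|⁻¹ • ∫ x, g x ∂μ := by
  let e := (f.equivOfDetNeZero hf).toContinuousLinearEquiv.toHomeomorph.toMeasurableEquiv
  rw [← show ∫ y, g y ∂(μ.map e) = ∫ x, g (f x) ∂μ from integral_map_equiv e g,
    show ⇑e = f from rfl, Measure.map_linearMap_addHaar_eq_smul_addHaar μ hf,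
    integral_smul_measure, ENNReal.toReal_ofReal (abs_nonneg _), abs_inv]

theorem integral_exp_neg_half_mul_norm_apply_sq {E : Type*} [NormedAddCommGroup E]
    [InnerProductSpace ℝ E] [FiniteDimensional ℝ E] [MeasurableSpace E] [BorelSpace E]
    {f : E →ₗ[ℝ] E} (hf : LinearMap.det f ≠ 0) :
    ∫ x, Real.exp (-(1 / 2) * ‖f x‖ ^ 2) =
      |LinearMap.det f|⁻¹ * (2 * Real.pi) ^ (Module.finrank ℝ E / 2 : ℝ) := by
  rw [integral_comp_linearMap_addHaar volume hf (fun y ↦ Real.exp (-(1 / 2) * ‖y‖ ^ 2)),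
    GaussianFourier.integral_rexp_neg_mul_sq_norm (by norm_num), smul_eq_mul]
  norm_num [div_eq_mul_inv, mul_comm]

theorem inner_add_two_smul_map_add_two_smul {E : Type*} [NormedAddCommGroup E]
    [InnerProductSpace ℝ E] (T : E →ₗ[ℝ] E) (x u : E) :
    ⟪x + (2 : ℝ) • u, T (x + (2 : ℝ) • u)⟫ =
      2 * ⟪x + u, T (x + u)⟫ - ⟪x, T x⟫ + 2 * ⟪u, T u⟫ := by
  simp only [map_add, map_smul, inner_add_left, inner_add_right, inner_smul_left,
    inner_smul_right, RCLike.conj_to_real]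
  ring

section Matrix

variable {n : Type*} [Fintype n] [DecidableEq n]

theorem inner_toEuclideanLin_conjTranspose_mul_self {m : Type*} [Fintype m] [DecidableEq m]
    (C : Matrix m n ℝ) (x : EuclideanSpace ℝ n) :
    ⟪x, toEuclideanLin (Cᴴ * C) x⟫ = ‖toEuclideanLin C x‖ ^ 2 := by
  rw [← real_inner_self_eq_norm_sq, ← LinearMap.adjoint_inner_right,
    ← toEuclideanLin_conjTranspose_eq_adjoint, ← LinearMap.comp_apply, ← toLpLin_mul_same]

open scoped MatrixOrder in
theorem Matrix.PosDef.exists_inv_eq_conjTranspose_mul_self {S : Matrix n n ℝ} (hS : S.PosDef) :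
    ∃ C : Matrix n n ℝ, S⁻¹ = Cᴴ * C ∧ |C.det| = S.det ^ (-(1 : ℝ) / 2) := by
  obtain ⟨C, hC⟩ := CStarAlgebra.nonneg_iff_eq_star_mul_self.mp hS.posSemidef.inv.nonneg
  refine ⟨C, hC, ?_⟩
  have hdet : C.det ^ 2 = S.det⁻¹ := by
    rw [← Ring.inverse_eq_inv', ← det_nonsing_inv, hC, star_eq_conjTranspose, det_mul,
      det_conjTranspose, star_trivial, sq]
  rw [← Real.sqrt_sq_eq_abs, hdet, Real.sqrt_eq_rpow, Real.inv_rpow hS.det_pos.le,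
    ← Real.rpow_neg hS.det_pos.le]
  norm_num

end Matrix

section Gaussian

variable {d : ℕ}

theorem gaussPdf_eq_toEuclideanLin (μ : EuclideanSpace ℝ (Fin d)) (S : Matrix (Fin d) (Fin d) ℝ)
    (z : EuclideanSpace ℝ (Fin d)) :
    gaussPdf μ S z = (2 * Real.pi) ^ (-(d : ℝ) / 2) * S.det ^ (-(1 : ℝ) / 2) *
      Real.exp (-(1 / 2) * ⟪z - μ, toEuclideanLin S⁻¹ (z - μ)⟫) :=
  rfl

theorem gaussPdf_pos {S : Matrix (Fin d) (Fin d) ℝ} (hS : S.PosDef)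
    (μ z : EuclideanSpace ℝ (Fin d)) : 0 < gaussPdf μ S z := by
  have := hS.det_pos
  unfold gaussPdf
  positivity

theorem gaussPdf_eq_of_inv_eq_conjTranspose_mul_self {S C : Matrix (Fin d) (Fin d) ℝ}
    (hC : S⁻¹ = Cᴴ * C) (μ z : EuclideanSpace ℝ (Fin d)) :
    gaussPdf μ S z = (2 * Real.pi) ^ (-(d : ℝ) / 2) * S.det ^ (-(1 : ℝ) / 2) *
      Real.exp (-(1 / 2) * ‖toEuclideanLin C (z - μ)‖ ^ 2) := by
  rw [gaussPdf_eq_toEuclideanLin, hC, inner_toEuclideanLin_conjTranspose_mul_self]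

theorem integral_gaussPdf {S : Matrix (Fin d) (Fin d) ℝ} (hS : S.PosDef)
    (μ : EuclideanSpace ℝ (Fin d)) : ∫ z, gaussPdf μ S z = 1 := by
  obtain ⟨C, hC, hCdet⟩ := hS.exists_inv_eq_conjTranspose_mul_self
  have hCdet₀ : LinearMap.det (toEuclideanLin C) ≠ 0 := by
    rw [LinearMap.det_toLpLin, ← abs_ne_zero, hCdet]
    exact (Real.rpow_pos_of_pos hS.det_pos _).ne'
  simp_rw [gaussPdf_eq_of_inv_eq_conjTranspose_mul_self hC μ]
  rw [integral_const_mul,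
    integral_sub_right_eq_self (fun x ↦ Real.exp (-(1 / 2) * ‖toEuclideanLin C x‖ ^ 2)),
    integral_exp_neg_half_mul_norm_apply_sq hCdet₀, LinearMap.det_toLpLin, hCdet,
    finrank_euclideanSpace_fin, neg_div (2 : ℝ) d, Real.rpow_neg (by positivity)]
  field_simp
  exact div_self (Real.rpow_pos_of_pos hS.det_pos _).ne'

theorem integrable_gaussPdf {S : Matrix (Fin d) (Fin d) ℝ} (hS : S.PosDef)
    (μ : EuclideanSpace ℝ (Fin d)) : Integrable (gaussPdf μ S) :=
  .of_integral_ne_zero <| by rw [integral_gaussPdf hS]; exact one_ne_zero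

theorem gaussPdf_sq (μ₁ μ₂ : EuclideanSpace ℝ (Fin d)) (S : Matrix (Fin d) (Fin d) ℝ)
    (z : EuclideanSpace ℝ (Fin d)) :
    gaussPdf μ₂ S z ^ 2 =
      Real.exp ⟪μ₁ - μ₂, toEuclideanLin S⁻¹ (μ₁ - μ₂)⟫ *
        gaussPdf ((2 : ℝ) • μ₂ - μ₁) S z * gaussPdf μ₁ S z := by
  have key := inner_add_two_smul_map_add_two_smul (toEuclideanLin S⁻¹) (z - μ₁) (μ₁ - μ₂)
  rw [show z - μ₁ + (μ₁ - μ₂) = z - μ₂ by abel,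
    show z - μ₁ + (2 : ℝ) • (μ₁ - μ₂) = z - ((2 : ℝ) • μ₂ - μ₁) by module] at key
  simp only [gaussPdf_eq_toEuclideanLin, key]
  set K := (2 * Real.pi) ^ (-(d : ℝ) / 2) * S.det ^ (-(1 : ℝ) / 2)
  set a := ⟪z - μ₂, toEuclideanLin S⁻¹ (z - μ₂)⟫
  set b := ⟪z - μ₁, toEuclideanLin S⁻¹ (z - μ₁)⟫
  set v := ⟪μ₁ - μ₂, toEuclideanLin S⁻¹ (μ₁ - μ₂)⟫
  calc (K * Real.exp (-(1 / 2) * a)) ^ 2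
      = K ^ 2 * Real.exp (v + -(1 / 2) * (2 * a - b + 2 * v) + -(1 / 2) * b) := by
        rw [mul_pow, sq (Real.exp _), ← Real.exp_add]
        ring_nf
    _ = _ := by
        rw [Real.exp_add, Real.exp_add]
        ring

end Gaussian

theorem integral_mul_half_div_sub_one_sq_of_sq_eq {α : Type*} [MeasurableSpace α]
    {ν : Measure α} {p q r : α → ℝ} {c : ℝ} (hp₀ : ∀ x, p x ≠ 0) (hp : Integrable p ν)
    (hq : Integrable q ν) (hr : Integrable r ν) (hp₁ : ∫ x, p x ∂ν = 1)
    (hq₁ : ∫ x, q x ∂ν = 1) (hr₁ : ∫ x, r x ∂ν = 1) (hsq : ∀ x, q x ^ 2 = c * r x * p x) :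
    ∫ x, p x * (1 / 2 * (q x / p x - 1) ^ 2) ∂ν = 1 / 2 * (c - 1) := by
  have hpt : ∀ x, p x * (1 / 2 * (q x / p x - 1) ^ 2) = 1 / 2 * c * r x - q x + 1 / 2 * p x := by
    intro x
    field_simp [hp₀ x]
    linear_combination hsq x
  have hcr : Integrable (fun x ↦ 1 / 2 * c * r x) ν := hr.const_mul _
  have hcrq : Integrable (fun x ↦ 1 / 2 * c * r x - q x) ν := hcr.sub hq
  simp_rw [hpt]
  rw [integral_add hcrq (hp.const_mul _), integral_sub hcr hq,
    integral_const_mul, integral_const_mul, hp₁, hq₁, hr₁]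
  ring

theorem chiSq_gaussian_gaussian_same_cov_general {d : ℕ}
    (μ₁ μ₂ : EuclideanSpace ℝ (Fin d)) (S : Matrix (Fin d) (Fin d) ℝ)
    (hS : S.PosDef) (s : ℝ)
    (hs : s = (1 / 2) * ⟪μ₁ - μ₂, (WithLp.toLp 2 ((S⁻¹).mulVec (μ₁ - μ₂)) : EuclideanSpace ℝ (Fin d))⟫) :
    (∫ z : EuclideanSpace ℝ (Fin d),
        gaussPdf μ₁ S z * ((1 / 2) * (gaussPdf μ₂ S z / gaussPdf μ₁ S z - 1) ^ 2)) =
      (1 / 2) * (Real.exp (2 * s) - 1) := by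
  rw [hs, ← mul_assoc, mul_one_div_cancel two_ne_zero, one_mul]
  exact integral_mul_half_div_sub_one_sq_of_sq_eq (fun z ↦ (gaussPdf_pos hS μ₁ z).ne')
    (integrable_gaussPdf hS μ₁) (integrable_gaussPdf hS μ₂) (integrable_gaussPdf hS _)
    (integral_gaussPdf hS μ₁) (integral_gaussPdf hS μ₂) (integral_gaussPdf hS _)
    (gaussPdf_sq μ₁ μ₂ S)

/-- Closed form of the χ²-divergence (with generator `f(t) = (1/2)(t−1)²`) between two
equal-covariance Gaussians: with `s = (1/2)‖μ₁ − μ₂‖²_{Σ⁻¹}`, the divergence equals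
`(1/2)(exp(2s) − 1)`. -/
theorem chiSq_gaussian_gaussian_same_cov {d : ℕ} (hd : 0 < d)
    (μ₁ μ₂ : EuclideanSpace ℝ (Fin d)) (S : Matrix (Fin d) (Fin d) ℝ)
    (hSs : S.IsSymm) (hS : S.PosDef) (s : ℝ)
    (hs : s = (1 / 2) * ⟪μ₁ - μ₂, (WithLp.toLp 2 ((S⁻¹).mulVec (μ₁ - μ₂)) : EuclideanSpace ℝ (Fin d))⟫) :
    (∫ z : EuclideanSpace ℝ (Fin d),
        gaussPdf μ₁ S z * ((1 / 2) * (gaussPdf μ₂ S z / gaussPdf μ₁ S z - 1) ^ 2)) =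
      (1 / 2) * (Real.exp (2 * s) - 1) :=
  chiSq_gaussian_gaussian_same_cov_general μ₁ μ₂ S hS s hs
end

section
/- Let ε, δ ∈ (0, 1), L > 0, σ₁ > 0, and set σ² = 2 · L² · Real.log (1.25/δ) / ε². Then: (a) for all z, z' ∈ ℝ with |z − z'| ≤ L and every measurable set S ⊆ ℝ, ProbabilityTheory.gaussianReal z σ² S ≤ ENNReal.ofReal (Real.exp ε) * ProbabilityTheory.gaussianReal z' σ² S + ENNReal.ofReal δ; and (b) for every μ₁ ∈ ℝ, the KL divergence between the noise-inflated and original latent Gaussians satisfies klDiv (gaussianReal μ₁ (σ₁² + σ²)) (gaussianReal μ₁ σ₁²) ≤ ENNReal.ofReal (L² · Real.log (1.25/δ) / (ε² · σ₁²)). Consequently, whenever the distortion budget b satisfies b ≥ L² · Real.log (1.25/δ) / (ε² · σ₁²), the additive Gaussian mechanism is (ε, δ)-differentially private and satisfies the KL distortion constraint klDiv ≤ ENNReal.ofReal b. -/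
/-!
(a) Where the density of `N(z, σ²)` is at most `e^ε` times that of `N(z', σ²)`, the first law is
dominated by `e^ε` times the second. The rest is the event that the privacy loss exceeds `ε`, a
half-line whose `N(z, σ²)`-probability is the standard normal tail beyond `√(2c) - ε / (2√(2c))`,
`c = log (1.25 / δ)`, once `|z - z'| ≤ L`. For `c ≥ log 2` the Mills-ratio bound
`P(N ≥ s) ≤ φ(s) / s` makes this tail at most `1.25 e^{-c} = δ`; for `c ≤ log 2` the threshold is
at least `-1/6` and `P(N ≥ -1/6) < 5/8 ≤ δ`.

(b) `KL(N(μ, w) ‖ N(μ, s)) = (log (s / w) + w / s - 1) / 2 ≤ (w - s) / (2 s)`, which for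
`s = σ₁²`, `w - s = σ²` is the stated budget.
-/

open MeasureTheory ProbabilityTheory
open scoped ENNReal

namespace InformationTheory

open scoped Classical in
/-- Kullback–Leibler divergence between two measures (as in current Mathlib;
for probability measures the correction term `ν univ − μ univ` vanishes). -/
noncomputable def klDiv' {α : Type*} [MeasurableSpace α] (μ ν : Measure α) : ℝ≥0∞ :=
  if μ ≪ ν ∧ Integrable (llr μ ν) μ then
    ENNReal.ofReal (∫ x, llr μ ν x ∂μ) + ν Set.univ - μ Set.univ
  else ⊤

end InformationTheory

open Real Set Filter
open scoped NNReal

namespace MeasureTheory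

lemma withDensity_le_mul_withDensity_add {α : Type*} [MeasurableSpace α] (ν : Measure α)
    [SFinite ν] {f g : α → ℝ≥0∞} (hg : Measurable g) (c : ℝ≥0∞) (S : Set α) :
    ν.withDensity f S ≤ c * ν.withDensity g S + ν.withDensity f {x | c * g x < f x} := by
  set B := {x | c * g x < f x}
  have hSB : ν.withDensity f (S \ B) ≤ c * ν.withDensity g S := by
    rw [withDensity_apply', withDensity_apply', ← lintegral_const_mul c hg]
    calc ∫⁻ x in S \ B, f x ∂ν ≤ ∫⁻ x in S \ B, c * g x ∂ν :=
          setLIntegral_mono (hg.const_mul c) fun x hx => not_lt.mp hx.2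
      _ ≤ ∫⁻ x in S, c * g x ∂ν := lintegral_mono_set sdiff_subset
  calc ν.withDensity f S ≤ ν.withDensity f (S \ B ∪ B) :=
        measure_mono (sdiff_union_self.symm ▸ subset_union_left)
    _ ≤ ν.withDensity f (S \ B) + ν.withDensity f B := measure_union_le _ _
    _ ≤ c * ν.withDensity g S + ν.withDensity f B := by gcongr

end MeasureTheory

lemma five_div_two_le_sqrt_two_mul_pi : 5 / 2 ≤ √(2 * π) :=
  (le_sqrt' (by norm_num)).mpr (by nlinarith [pi_gt_d2])

namespace ProbabilityTheory

lemma gaussianPDFReal_le (μ : ℝ) (v : ℝ≥0) (x : ℝ) :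
    gaussianPDFReal μ v x ≤ (√(2 * π * v))⁻¹ := by
  rw [gaussianPDFReal]
  refine mul_le_of_le_one_right (by positivity) (exp_le_one_iff.mpr ?_)
  exact div_nonpos_of_nonpos_of_nonneg (neg_nonpos.mpr (sq_nonneg _)) (by positivity)

lemma gaussianPDFReal_zero_one (x : ℝ) : gaussianPDFReal 0 1 x = exp (-x ^ 2 / 2) / √(2 * π) := by
  simp [gaussianPDFReal, div_eq_inv_mul]

lemma log_gaussianPDFReal (μ : ℝ) {v : ℝ≥0} (hv : v ≠ 0) (x : ℝ) :
    log (gaussianPDFReal μ v x) = -(log (2 * π * v) / 2) - (x - μ) ^ 2 / (2 * v) := by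
  rw [gaussianPDFReal, log_mul (by positivity) (exp_ne_zero _), log_exp, log_inv,
    log_sqrt (by positivity)]
  ring

lemma log_gaussianPDFReal_div (μ₁ μ₂ : ℝ) {v₁ v₂ : ℝ≥0} (hv₁ : v₁ ≠ 0) (hv₂ : v₂ ≠ 0)
    (x : ℝ) :
    log (gaussianPDFReal μ₁ v₁ x / gaussianPDFReal μ₂ v₂ x) =
      log (v₂ / v₁) / 2 + (x - μ₂) ^ 2 / (2 * v₂) - (x - μ₁) ^ 2 / (2 * v₁) := by
  have hv₁' : (0 : ℝ) < v₁ := by positivity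
  have hv₂' : (0 : ℝ) < v₂ := by positivity
  rw [log_div (gaussianPDFReal_pos _ _ _ hv₁).ne' (gaussianPDFReal_pos _ _ _ hv₂).ne',
    log_gaussianPDFReal _ hv₁, log_gaussianPDFReal _ hv₂, log_div hv₂'.ne' hv₁'.ne',
    log_mul (by positivity) hv₁'.ne', log_mul (by positivity) hv₂'.ne']
  ring

lemma gaussianReal_le_mul_volume (μ : ℝ) {v : ℝ≥0} (hv : v ≠ 0) (A : Set ℝ) :
    gaussianReal μ v A ≤ ENNReal.ofReal (√(2 * π * v))⁻¹ * volume A := by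
  rw [gaussianReal_of_var_ne_zero μ hv, withDensity_apply', ← setLIntegral_const]
  exact lintegral_mono fun x => ENNReal.ofReal_le_ofReal (gaussianPDFReal_le μ v x)

lemma gaussianReal_map_const_add_mul (μ c : ℝ) :
    (gaussianReal 0 1).map (fun y => μ + c * y) = gaussianReal μ ⟨c ^ 2, sq_nonneg c⟩ := by
  have : (fun y => μ + c * y) = (μ + ·) ∘ (c * ·) := rfl
  rw [this, ← Measure.map_map (measurable_const_add μ) (measurable_const_mul c),
    gaussianReal_map_const_mul, gaussianReal_map_const_add, mul_zero, zero_add, mul_one]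
  rfl

lemma gaussianReal_preimage_neg (v : ℝ≥0) {A : Set ℝ} (hA : MeasurableSet A) :
    gaussianReal 0 v ((fun x => -x) ⁻¹' A) = gaussianReal 0 v A := by
  rw [← Measure.map_apply measurable_neg hA, gaussianReal_map_neg, neg_zero]

lemma gaussianReal_Ici_zero {v : ℝ≥0} (hv : v ≠ 0) : gaussianReal 0 v (Ici 0) = 2⁻¹ := by
  have := nullSingletonClass_gaussianReal (μ := 0) hv
  have hIio : gaussianReal 0 v (Iio 0) = gaussianReal 0 v (Ici 0) := by
    rw [← measure_congr Ioi_ae_eq_Ici, ← gaussianReal_preimage_neg v measurableSet_Ioi]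
    congr 1
    ext x
    simp
  have hsum : gaussianReal 0 v (Iio 0) + gaussianReal 0 v (Ici 0) = 1 := by
    rw [← compl_Ici, add_comm, measure_add_measure_compl measurableSet_Ici, measure_univ]
  rw [hIio, ← mul_two] at hsum
  exact ENNReal.eq_inv_of_mul_eq_one_left hsum

lemma llr_gaussianReal_ae_eq (μ₁ μ₂ : ℝ) {v₁ v₂ : ℝ≥0} (hv₁ : v₁ ≠ 0) (hv₂ : v₂ ≠ 0) :
    llr (gaussianReal μ₁ v₁) (gaussianReal μ₂ v₂) =ᵐ[gaussianReal μ₁ v₁]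
      fun x => log (gaussianPDFReal μ₁ v₁ x / gaussianPDFReal μ₂ v₂ x) := by
  refine (gaussianReal_absolutelyContinuous μ₁ hv₁).ae_eq ?_
  have h_rn := Measure.rnDeriv_withDensity_right (gaussianReal μ₁ v₁) volume
    (measurable_gaussianPDF μ₂ v₂).aemeasurable
    (ae_of_all _ fun x => (gaussianPDF_pos μ₂ hv₂ x).ne') (ae_of_all _ fun _ => gaussianPDF_ne_top)
  rw [← gaussianReal_of_var_ne_zero μ₂ hv₂] at h_rn
  filter_upwards [h_rn, rnDeriv_gaussianReal μ₁ v₁] with x hx hx₁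
  rw [llr, hx, hx₁, gaussianPDF, gaussianPDF, ENNReal.toReal_mul, ENNReal.toReal_inv,
    ENNReal.toReal_ofReal (gaussianPDFReal_nonneg _ _ _),
    ENNReal.toReal_ofReal (gaussianPDFReal_nonneg _ _ _), inv_mul_eq_div]

lemma integrable_sub_sq_gaussianReal (μ c : ℝ) (v : ℝ≥0) :
    Integrable (fun x => (x - c) ^ 2) (gaussianReal μ v) :=
  ((memLp_id_gaussianReal 2).sub (memLp_const c)).integrable_sq

lemma integral_sub_sq_gaussianReal (μ c : ℝ) (v : ℝ≥0) :
    ∫ x, (x - c) ^ 2 ∂gaussianReal μ v = v + (μ - c) ^ 2 := by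
  have hX : MemLp (fun x : ℝ => x - c) 2 (gaussianReal μ v) :=
    (memLp_id_gaussianReal 2).sub (memLp_const c)
  have hint : Integrable (fun x : ℝ => x) (gaussianReal μ v) :=
    (memLp_id_gaussianReal 1).integrable le_rfl
  have hvar := variance_eq_sub hX
  rw [variance_sub_const measurable_id'.aestronglyMeasurable, variance_fun_id_gaussianReal,
    integral_sub hint (integrable_const c), integral_id_gaussianReal] at hvar
  simp only [Pi.pow_apply, integral_const, probReal_univ, smul_eq_mul, one_mul] at hvar
  linarith

lemma integrable_log_gaussianPDFReal_div (μ₁ μ₂ : ℝ) {v₁ v₂ : ℝ≥0} (hv₁ : v₁ ≠ 0)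
    (hv₂ : v₂ ≠ 0) :
    Integrable (fun x => log (gaussianPDFReal μ₁ v₁ x / gaussianPDFReal μ₂ v₂ x))
      (gaussianReal μ₁ v₁) := by
  simp_rw [log_gaussianPDFReal_div μ₁ μ₂ hv₁ hv₂]
  exact ((integrable_const _).add ((integrable_sub_sq_gaussianReal μ₁ μ₂ v₁).div_const _)).sub
    ((integrable_sub_sq_gaussianReal μ₁ μ₁ v₁).div_const _)

lemma integrable_mul_exp_neg_sq_div_two : Integrable fun x : ℝ => x * exp (-x ^ 2 / 2) := by
  convert integrable_mul_exp_neg_mul_sq (b := 1 / 2) (by norm_num) using 3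
  congr 1
  ring

lemma integral_Ioi_mul_exp_neg_sq_div_two (s : ℝ) :
    ∫ x in Ioi s, x * exp (-x ^ 2 / 2) = exp (-s ^ 2 / 2) := by
  have hderiv (x : ℝ) (_ : x ∈ Ici s) :
      HasDerivAt (fun x => -exp (-x ^ 2 / 2)) (x * exp (-x ^ 2 / 2)) x := by
    have h : HasDerivAt (fun x : ℝ => -x ^ 2 / 2) (-x) x :=
      ((hasDerivAt_pow 2 x).neg.div_const 2).congr_deriv (by ring)
    exact h.exp.neg.congr_deriv (by ring)
  have hlim : Tendsto (fun x : ℝ => -exp (-x ^ 2 / 2)) atTop (nhds (-0)) := by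
    simp_rw [neg_div]
    exact (tendsto_exp_atBot.comp (tendsto_neg_atTop_atBot.comp
      ((tendsto_pow_atTop two_ne_zero).atTop_div_const two_pos))).neg
  rw [integral_Ioi_of_hasDerivAt_of_tendsto' hderiv
    integrable_mul_exp_neg_sq_div_two.integrableOn hlim]
  ring

lemma gaussianReal_Ici_le_of_pos {s : ℝ} (hs : 0 < s) :
    gaussianReal 0 1 (Ici s) ≤ ENNReal.ofReal (exp (-s ^ 2 / 2) / (s * √(2 * π))) := by
  rw [gaussianReal_apply_eq_integral 0 one_ne_zero]
  refine ENNReal.ofReal_le_ofReal ?_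
  calc ∫ x in Ici s, gaussianPDFReal 0 1 x
      ≤ ∫ x in Ici s, (s * √(2 * π))⁻¹ * (x * exp (-x ^ 2 / 2)) := by
        refine setIntegral_mono_on (integrable_gaussianPDFReal 0 1).integrableOn
          (integrable_mul_exp_neg_sq_div_two.const_mul _).integrableOn measurableSet_Ici
          fun x hx => ?_
        have hxs : 1 ≤ x / s := (one_le_div hs).mpr hx
        calc gaussianPDFReal 0 1 x ≤ x / s * (exp (-x ^ 2 / 2) / √(2 * π)) := by
              rw [gaussianPDFReal_zero_one]
              exact le_mul_of_one_le_left (by positivity) hxs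
          _ = (s * √(2 * π))⁻¹ * (x * exp (-x ^ 2 / 2)) := by field_simp
    _ = exp (-s ^ 2 / 2) / (s * √(2 * π)) := by
        rw [integral_const_mul, integral_Ici_eq_integral_Ioi,
          integral_Ioi_mul_exp_neg_sq_div_two, inv_mul_eq_div]

lemma gaussianReal_Ici_le_of_nonpos {s : ℝ} (hs : s ≤ 0) :
    gaussianReal 0 1 (Ici s) ≤ ENNReal.ofReal (1 / 2 - s / √(2 * π)) := by
  calc gaussianReal 0 1 (Ici s) ≤ gaussianReal 0 1 (Ico s 0) + gaussianReal 0 1 (Ici 0) := by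
        rw [← Ico_union_Ici_eq_Ici hs]
        exact measure_union_le _ _
    _ ≤ ENNReal.ofReal (√(2 * π))⁻¹ * ENNReal.ofReal (-s) + 2⁻¹ := by
        gcongr
        · simpa using gaussianReal_le_mul_volume 0 one_ne_zero (Ico s 0)
        · exact (gaussianReal_Ici_zero one_ne_zero).le
    _ = ENNReal.ofReal (1 / 2 - s / √(2 * π)) := by
        rw [← ENNReal.ofReal_mul (by positivity), show (2 : ℝ≥0∞)⁻¹ = ENNReal.ofReal 2⁻¹ by simp,
          ← ENNReal.ofReal_add (mul_nonneg (by positivity) (neg_nonneg.mpr hs)) (by norm_num)]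
        congr 1
        ring

lemma gaussianReal_Ici_sqrt_sub_le_of_le_log_two {c ε : ℝ} (hc : 1 / 5 ≤ c) (hc₂ : c ≤ log 2)
    (hε : ε ≤ 1) :
    gaussianReal 0 1 (Ici (√(2 * c) - ε / (2 * √(2 * c)))) ≤ ENNReal.ofReal (5 / 4 * exp (-c)) := by
  have hu : 0 < √(2 * c) := sqrt_pos.mpr (by linarith)
  have hu₂ : √(2 * c) ^ 2 = 2 * c := sq_sqrt (by linarith)
  have hs : -1 / 6 ≤ √(2 * c) - ε / (2 * √(2 * c)) := by
    have : ε / (2 * √(2 * c)) ≤ √(2 * c) + 1 / 6 := by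
      rw [div_le_iff₀ (by positivity)]
      nlinarith
    linarith
  have hexp : 1 / 2 ≤ exp (-c) := by
    rw [← exp_log (by norm_num : (0 : ℝ) < 1 / 2), exp_le_exp, one_div, log_inv]
    linarith
  calc gaussianReal 0 1 (Ici (√(2 * c) - ε / (2 * √(2 * c))))
      ≤ gaussianReal 0 1 (Ici (-1 / 6)) := measure_mono (Ici_subset_Ici.mpr hs)
    _ ≤ ENNReal.ofReal (1 / 2 - -1 / 6 / √(2 * π)) := gaussianReal_Ici_le_of_nonpos (by norm_num)
    _ ≤ ENNReal.ofReal (5 / 4 * exp (-c)) := by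
        refine ENNReal.ofReal_le_ofReal ?_
        have : -(1 / 15) ≤ -1 / 6 / √(2 * π) := by
          rw [le_div_iff₀ (by positivity)]
          linarith [five_div_two_le_sqrt_two_mul_pi]
        linarith

lemma gaussianReal_Ici_sqrt_sub_le_of_log_two_le {c ε : ℝ} (hc : log 2 ≤ c) (hε : ε ≤ 1) :
    gaussianReal 0 1 (Ici (√(2 * c) - ε / (2 * √(2 * c)))) ≤ ENNReal.ofReal (5 / 4 * exp (-c)) := by
  have hlog₂ := log_two_gt_d9
  have hu : 0 < √(2 * c) := sqrt_pos.mpr (by linarith)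
  have hu₂ : √(2 * c) ^ 2 = 2 * c := sq_sqrt (by linarith)
  set s := √(2 * c) - ε / (2 * √(2 * c))
  have hs : 2 / 3 ≤ s := by
    have : ε / (2 * √(2 * c)) ≤ √(2 * c) - 2 / 3 := by
      rw [div_le_iff₀ (by positivity)]
      nlinarith
    linarith
  have hs₂ : 2 * c - 1 ≤ s ^ 2 := by
    have : √(2 * c) * (ε / (2 * √(2 * c))) = ε / 2 := by field_simp
    nlinarith [sq_nonneg (ε / (2 * √(2 * c)))]
  have hexp_half : exp (1 / 2) ≤ 2 := by
    have : exp (1 / 2) * exp (1 / 2) = exp 1 := by rw [← exp_add]; norm_num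
    nlinarith [exp_one_lt_d9, exp_pos (1 / 2)]
  have hexp : exp (-s ^ 2 / 2) ≤ 2 * exp (-c) := by
    calc exp (-s ^ 2 / 2) ≤ exp (1 / 2) * exp (-c) := by
          rw [← exp_add, exp_le_exp]
          linarith
      _ ≤ 2 * exp (-c) := by gcongr
  refine (gaussianReal_Ici_le_of_pos (by linarith)).trans (ENNReal.ofReal_le_ofReal ?_)
  rw [div_le_iff₀ (by positivity)]
  have : 5 / 3 ≤ s * √(2 * π) := by
    nlinarith [five_div_two_le_sqrt_two_mul_pi]
  nlinarith [exp_pos (-c)]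

lemma gaussianReal_Ici_sqrt_sub_le {c ε : ℝ} (hc : 1 / 5 ≤ c) (hε : ε ≤ 1) :
    gaussianReal 0 1 (Ici (√(2 * c) - ε / (2 * √(2 * c)))) ≤ ENNReal.ofReal (5 / 4 * exp (-c)) := by
  rcases le_total c (log 2) with hc₂ | hc₂
  · exact gaussianReal_Ici_sqrt_sub_le_of_le_log_two hc hc₂ hε
  · exact gaussianReal_Ici_sqrt_sub_le_of_log_two_le hc₂ hε

lemma setOf_exp_mul_gaussianPDF_lt_subset (z z' ε : ℝ) {v : ℝ≥0} (hv : v ≠ 0) :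
    {x | ENNReal.ofReal (exp ε) * gaussianPDF z' v x < gaussianPDF z v x} ⊆
      {x | 2 * v * ε < (x - z') ^ 2 - (x - z) ^ 2} := by
  intro x hx
  simp only [mem_ofPred_eq, gaussianPDF, ← ENNReal.ofReal_mul (exp_nonneg ε)] at hx ⊢
  have hp' := gaussianPDFReal_pos z' v x hv
  have hlt := (ENNReal.ofReal_lt_ofReal_iff (gaussianPDFReal_pos z v x hv)).mp hx
  have hlog : ε < log (gaussianPDFReal z v x / gaussianPDFReal z' v x) := by
    rw [lt_log_iff_exp_lt (div_pos (gaussianPDFReal_pos z v x hv) hp'), lt_div_iff₀ hp']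
    exact hlt
  rw [log_gaussianPDFReal_div z z' hv hv, div_self (by positivity), log_one, zero_div,
    zero_add, ← sub_div, lt_div_iff₀ (by positivity)] at hlog
  linarith

lemma gaussianReal_setOf_lt_sq_sub_sq_le (z z' : ℝ) {v : ℝ≥0} {ε L : ℝ} (hv : v ≠ 0)
    (hε : 0 ≤ ε) (hzL : |z - z'| ≤ L) :
    gaussianReal z v {x | 2 * v * ε < (x - z') ^ 2 - (x - z) ^ 2} ≤
      gaussianReal 0 1 (Ici (√v * ε / L - L / (2 * √v))) := by
  rcases eq_or_ne z' z with rfl | hzz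
  · have hempty : {x | 2 * v * ε < (x - z') ^ 2 - (x - z') ^ 2} = ∅ := by
      ext x
      simp only [sub_self, mem_ofPred_eq, mem_empty_iff_false, iff_false, not_lt]
      positivity
    rw [hempty, measure_empty]
    exact zero_le
  set a := z' - z
  set w := √(v : ℝ)
  have hw₀ : 0 < w := sqrt_pos.mpr (by positivity)
  have hw₂ : w ^ 2 = v := sq_sqrt v.2
  have ha₀ : a ≠ 0 := sub_ne_zero.mpr hzz
  have hm : 0 < |a| := abs_pos.mpr ha₀
  have hmL : |a| ≤ L := by rwa [abs_sub_comm]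
  -- `x = z + c y` with `y` standard normal; the sign of `c` makes the event an upper half-line.
  set c := -(a / |a|) * w with hc
  have hac : -a * c = |a| * w := by
    rw [hc, ← mul_assoc, neg_mul_neg, ← mul_div_assoc, ← sq, ← sq_abs, sq, mul_div_assoc,
      div_self hm.ne', mul_one]
  have hc₂ : c ^ 2 = v := by
    rw [hc, neg_mul, neg_sq, mul_pow, div_pow, sq_abs, div_self (pow_ne_zero 2 ha₀), one_mul, hw₂]
  have hmap : (gaussianReal 0 1).map (fun y => z + c * y) = gaussianReal z v := by
    rw [gaussianReal_map_const_add_mul]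
    exact congrArg _ (NNReal.eq hc₂)
  rw [← hmap, Measure.map_apply (by fun_prop) (measurableSet_lt (by fun_prop) (by fun_prop))]
  refine measure_mono fun y hy => ?_
  have hy' : 2 * w ^ 2 * ε < |a| ^ 2 + 2 * (|a| * w) * y := by
    rw [hw₂, sq_abs, ← hac]
    simp only [mem_preimage, mem_ofPred_eq] at hy
    linear_combination hy
  have hL : 0 < L := hm.trans_le hmL
  rw [mem_Ici, div_sub_div _ _ hL.ne' (by positivity), div_le_iff₀ (by positivity)]
  nlinarith [mul_nonneg (sub_nonneg.mpr hmL) (by positivity : 0 ≤ 2 * w ^ 2 * ε + |a| * L),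
    mul_lt_mul_of_pos_left hy' hL]

theorem gaussianReal_le_exp_mul_add_gaussianReal_Ici (z z' : ℝ) {v : ℝ≥0} {ε L : ℝ}
    (hv : v ≠ 0) (hε : 0 ≤ ε) (hzL : |z - z'| ≤ L) (S : Set ℝ) :
    gaussianReal z v S ≤ ENNReal.ofReal (exp ε) * gaussianReal z' v S +
      gaussianReal 0 1 (Ici (√v * ε / L - L / (2 * √v))) := by
  have hsplit := withDensity_le_mul_withDensity_add volume (f := gaussianPDF z v)
    (measurable_gaussianPDF z' v) (ENNReal.ofReal (exp ε)) S
  rw [← gaussianReal_of_var_ne_zero z hv, ← gaussianReal_of_var_ne_zero z' hv] at hsplit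
  refine hsplit.trans (add_le_add le_rfl ?_)
  exact (measure_mono (setOf_exp_mul_gaussianPDF_lt_subset z z' ε hv)).trans
    (gaussianReal_setOf_lt_sq_sub_sq_le z z' hv hε hzL)

theorem gaussianReal_le_exp_mul_add_of_var_eq (z z' : ℝ) {v : ℝ≥0} {ε δ L : ℝ}
    (hε₀ : 0 < ε) (hε₁ : ε ≤ 1) (hδ₀ : 0 < δ) (hδ₁ : δ < 1) (hL : 0 < L)
    (hv : (v : ℝ) = 2 * L ^ 2 * log (1.25 / δ) / ε ^ 2) (hzL : |z - z'| ≤ L) (S : Set ℝ) :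
    gaussianReal z v S ≤ ENNReal.ofReal (exp ε) * gaussianReal z' v S + ENNReal.ofReal δ := by
  set c := log (1.25 / δ) with hc_def
  have hc : 1 / 5 ≤ c := by
    have := one_sub_inv_le_log_of_pos (by positivity : (0 : ℝ) < 1.25 / δ)
    rw [inv_div] at this
    linarith [div_lt_div_of_pos_right hδ₁ (by norm_num : (0 : ℝ) < 1.25)]
  have hδ : 5 / 4 * exp (-c) = δ := by
    rw [exp_neg, hc_def, exp_log (by positivity)]
    field_simp
    norm_num
  have hsqrt : √(v : ℝ) = L * √(2 * c) / ε := by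
    rw [hv, show 2 * L ^ 2 * c / ε ^ 2 = (L / ε) ^ 2 * (2 * c) by ring, sqrt_mul (sq_nonneg _),
      sqrt_sq (by positivity)]
    ring
  have hv₀ : v ≠ 0 := by
    rw [← NNReal.coe_ne_zero, hv]
    have : 0 < c := by linarith
    positivity
  have hthreshold : √(v : ℝ) * ε / L - L / (2 * √(v : ℝ)) = √(2 * c) - ε / (2 * √(2 * c)) := by
    have : 0 < √(2 * c) := sqrt_pos.mpr (by linarith)
    rw [hsqrt]
    field_simp
  calc gaussianReal z v S
      ≤ ENNReal.ofReal (exp ε) * gaussianReal z' v S +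
          gaussianReal 0 1 (Ici (√v * ε / L - L / (2 * √v))) :=
        gaussianReal_le_exp_mul_add_gaussianReal_Ici z z' hv₀ hε₀.le hzL S
    _ ≤ ENNReal.ofReal (exp ε) * gaussianReal z' v S + ENNReal.ofReal δ := by
        rw [hthreshold, ← hδ]
        gcongr
        exact gaussianReal_Ici_sqrt_sub_le hc hε₁

end ProbabilityTheory

namespace InformationTheory

theorem klDiv'_gaussianReal (μ₁ μ₂ : ℝ) {v₁ v₂ : ℝ≥0} (hv₁ : v₁ ≠ 0) (hv₂ : v₂ ≠ 0) :
    klDiv' (gaussianReal μ₁ v₁) (gaussianReal μ₂ v₂) =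
      ENNReal.ofReal ((log (v₂ / v₁) + (v₁ + (μ₁ - μ₂) ^ 2) / v₂ - 1) / 2) := by
  have hllr := llr_gaussianReal_ae_eq μ₁ μ₂ hv₁ hv₂
  have hac : gaussianReal μ₁ v₁ ≪ gaussianReal μ₂ v₂ :=
    (gaussianReal_absolutelyContinuous μ₁ hv₁).trans (gaussianReal_absolutelyContinuous' μ₂ hv₂)
  have hint := integrable_log_gaussianPDFReal_div μ₁ μ₂ hv₁ hv₂
  rw [klDiv', if_pos ⟨hac, hint.congr hllr.symm⟩, measure_univ, measure_univ,
    ENNReal.add_sub_cancel_right ENNReal.one_ne_top, integral_congr_ae hllr]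
  simp_rw [log_gaussianPDFReal_div μ₁ μ₂ hv₁ hv₂]
  have h₂ : Integrable (fun x => log (v₂ / v₁ : ℝ) / 2 + (x - μ₂) ^ 2 / (2 * v₂))
      (gaussianReal μ₁ v₁) :=
    (integrable_const _).add ((integrable_sub_sq_gaussianReal μ₁ μ₂ v₁).div_const _)
  rw [integral_sub h₂ ((integrable_sub_sq_gaussianReal μ₁ μ₁ v₁).div_const _),
    integral_add (integrable_const _) ((integrable_sub_sq_gaussianReal μ₁ μ₂ v₁).div_const _),
    integral_const, probReal_univ, one_smul]
  simp only [integral_div, integral_sub_sq_gaussianReal]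
  congr 1
  field_simp
  ring

lemma klDiv'_gaussianReal_add_var_le (μ : ℝ) {v : ℝ≥0} (hv : v ≠ 0) (w : ℝ≥0) :
    klDiv' (gaussianReal μ (v + w)) (gaussianReal μ v) ≤
      ENNReal.ofReal (w / (2 * v)) := by
  rw [klDiv'_gaussianReal μ μ (v₁ := v + w) (by positivity) hv]
  refine ENNReal.ofReal_le_ofReal ?_
  have hlog : log (v / (v + w : ℝ≥0)) ≤ 0 :=
    log_nonpos (by positivity) (div_le_one_of_le₀ (by simp) (by positivity))
  have hratio : ((v + w : ℝ≥0) + (μ - μ) ^ 2) / (v : ℝ) - 1 = w / v := by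
    push_cast; field_simp; ring
  rw [add_sub_assoc, hratio, show (w : ℝ) / (2 * v) = (0 + w / v) / 2 by ring]
  gcongr

end InformationTheory

/-- With noise variance `σ² = 2L²log(1.25/δ)/ε²`: (a) the one-dimensional Gaussian mechanism is
`(ε, δ)`-differentially private for sensitivity `L`, and (b) its KL distortion on a Gaussian
latent `N(μ₁, σ₁²)` is at most `L²log(1.25/δ)/(ε²σ₁²)`; consequently, any distortion budget
`b ≥ L²log(1.25/δ)/(ε²σ₁²)` admits an `(ε, δ)`-DP additive Gaussian mechanism meeting the
KL constraint `klDiv ≤ b`. -/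
theorem gaussian_mechanism_dp_and_klBudget (ε δ L σ₁ : ℝ)
    (hε : ε ∈ Set.Ioo (0 : ℝ) 1) (hδ : δ ∈ Set.Ioo (0 : ℝ) 1) (hL : 0 < L) (hσ₁ : 0 < σ₁)
    (σsq : NNReal) (hσsq : (σsq : ℝ) = 2 * L ^ 2 * Real.log (1.25 / δ) / ε ^ 2) :
    ((∀ z z' : ℝ, |z - z'| ≤ L → ∀ S : Set ℝ, MeasurableSet S →
        gaussianReal z σsq S ≤
          ENNReal.ofReal (Real.exp ε) * gaussianReal z' σsq S + ENNReal.ofReal δ) ∧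
      (∀ μ₁ : ℝ,
        InformationTheory.klDiv' (gaussianReal μ₁ (⟨σ₁ ^ 2, sq_nonneg σ₁⟩ + σsq))
            (gaussianReal μ₁ ⟨σ₁ ^ 2, sq_nonneg σ₁⟩) ≤
          ENNReal.ofReal (L ^ 2 * Real.log (1.25 / δ) / (ε ^ 2 * σ₁ ^ 2)))) ∧
    ∀ b : ℝ, L ^ 2 * Real.log (1.25 / δ) / (ε ^ 2 * σ₁ ^ 2) ≤ b →
      ((∀ z z' : ℝ, |z - z'| ≤ L → ∀ S : Set ℝ, MeasurableSet S →
          gaussianReal z σsq S ≤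
            ENNReal.ofReal (Real.exp ε) * gaussianReal z' σsq S + ENNReal.ofReal δ) ∧
        ∀ μ₁ : ℝ,
          InformationTheory.klDiv' (gaussianReal μ₁ (⟨σ₁ ^ 2, sq_nonneg σ₁⟩ + σsq))
              (gaussianReal μ₁ ⟨σ₁ ^ 2, sq_nonneg σ₁⟩) ≤
            ENNReal.ofReal b) := by
  obtain ⟨hε₀, hε₁⟩ := hε
  obtain ⟨hδ₀, hδ₁⟩ := hδ
  have hDP z z' (hzL : |z - z'| ≤ L) S (_ : MeasurableSet S) :=
    gaussianReal_le_exp_mul_add_of_var_eq z z' hε₀ hε₁.le hδ₀ hδ₁ hL hσsq hzL S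
  have hσ₁' : (⟨σ₁ ^ 2, sq_nonneg σ₁⟩ : ℝ≥0) ≠ 0 := NNReal.coe_ne_zero.mp (pow_pos hσ₁ 2).ne'
  have hbudget : (σsq : ℝ) / (2 * σ₁ ^ 2) = L ^ 2 * log (1.25 / δ) / (ε ^ 2 * σ₁ ^ 2) := by
    rw [hσsq]
    field_simp
  have hKL (μ₁ : ℝ) := hbudget ▸ InformationTheory.klDiv'_gaussianReal_add_var_le μ₁ hσ₁' σsq
  exact ⟨⟨hDP, hKL⟩, fun b hb => ⟨hDP, fun μ₁ => (hKL μ₁).trans (ENNReal.ofReal_le_ofReal hb)⟩⟩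
end

section
/- Let Z and Y be nonempty finite types and let q : Z × Y → ℝ be a strictly positive probability mass function (q(z,y) > 0 for all (z,y) and ∑_{z,y} q(z,y) = 1) with marginals qZ z = ∑_y q(z,y) and qY y = ∑_z q(z,y). Let p : Z → Y → ℝ satisfy p z y > 0 and ∑_y p z y = 1 for every z. Define the mutual information I = ∑_{z,y} q(z,y) · Real.log (q(z,y) / (qZ z · qY y)), the entropy H(Y) = −∑_y qY y · Real.log (qY y), and the conditional distribution q(y|z) = q(z,y)/qZ z. Then I = ∑_z qZ z · (∑_y q(y|z) · Real.log (q(y|z) / p z y)) + ∑_{z,y} q(z,y) · Real.log (p z y) + H(Y). That is, the mutual information decomposes as the expected KL divergence E_{q(z)}[KL(q(·|z) ‖ p(·|z))], plus the expected log-likelihood of the approximating conditional p, plus the entropy of Y. -/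
open Finset Real

theorem mul_log_div_mul_eq {x a b c : ℝ} (hx : x ≠ 0) (ha : a ≠ 0) (hb : b ≠ 0) (hc : c ≠ 0) :
    x * log (x / (a * b)) = a * (x / a * log (x / a / c)) + x * log c + -(x * log b) := by
  rw [log_div (div_ne_zero hx ha) hc, log_div hx (mul_ne_zero ha hb), log_mul ha hb,
    log_div hx ha]
  field_simp
  ring

theorem mutualInfo_eq_expected_klDiv_add_loglik_add_entropy_general
    {Z Y : Type*} [Fintype Z] [Fintype Y]
    (q : Z × Y → ℝ) (hq : ∀ zy, 0 < q zy)
    (qZ : Z → ℝ) (hqZ : ∀ z, qZ z = ∑ y, q (z, y))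
    (qY : Y → ℝ) (hqY : ∀ y, qY y = ∑ z, q (z, y))
    (p : Z → Y → ℝ) (hp : ∀ z y, 0 < p z y) :
    (∑ z, ∑ y, q (z, y) * Real.log (q (z, y) / (qZ z * qY y))) =
      (∑ z, qZ z * ∑ y, (q (z, y) / qZ z) * Real.log ((q (z, y) / qZ z) / p z y)) +
        (∑ z, ∑ y, q (z, y) * Real.log (p z y)) +
        -∑ y, qY y * Real.log (qY y) := by
  have hqZ_pos (z : Z) (y : Y) : 0 < qZ z :=
    (hq (z, y)).trans_le <| hqZ z ▸ single_le_sum (fun y' _ ↦ (hq (z, y')).le) (mem_univ y)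
  have hqY_pos (z : Z) (y : Y) : 0 < qY y :=
    (hq (z, y)).trans_le <| hqY y ▸ single_le_sum (fun z' _ ↦ (hq (z', y)).le) (mem_univ z)
  have entropy : ∑ y, qY y * log (qY y) = ∑ z, ∑ y, q (z, y) * log (qY y) := by
    simp_rw [hqY, sum_mul]
    exact sum_comm
  calc (∑ z, ∑ y, q (z, y) * log (q (z, y) / (qZ z * qY y)))
      = ∑ z, ∑ y, (qZ z * (q (z, y) / qZ z * log (q (z, y) / qZ z / p z y)) +
          q (z, y) * log (p z y) + -(q (z, y) * log (qY y))) :=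
        sum_congr rfl fun z _ ↦ sum_congr rfl fun y _ ↦ mul_log_div_mul_eq (hq (z, y)).ne'
          (hqZ_pos z y).ne' (hqY_pos z y).ne' (hp z y).ne'
    _ = _ := by
      rw [entropy]
      simp only [sum_add_distrib, mul_sum, sum_neg_distrib]

/-- Decomposition of mutual information: `I(Z;Y)` equals the expected KL divergence
`E_{q(z)}[KL(q(·|z) ‖ p(·|z))]`, plus the expected log-likelihood of the approximating
conditional `p`, plus the entropy `H(Y)`. -/
theorem mutualInfo_eq_expected_klDiv_add_loglik_add_entropy
    {Z Y : Type*} [Fintype Z] [Fintype Y] [Nonempty Z] [Nonempty Y]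
    (q : Z × Y → ℝ) (hq : ∀ zy, 0 < q zy) (hq1 : ∑ zy : Z × Y, q zy = 1)
    (qZ : Z → ℝ) (hqZ : ∀ z, qZ z = ∑ y, q (z, y))
    (qY : Y → ℝ) (hqY : ∀ y, qY y = ∑ z, q (z, y))
    (p : Z → Y → ℝ) (hp : ∀ z y, 0 < p z y) (hp1 : ∀ z, ∑ y, p z y = 1) :
    (∑ z, ∑ y, q (z, y) * Real.log (q (z, y) / (qZ z * qY y))) =
      (∑ z, qZ z * ∑ y, (q (z, y) / qZ z) * Real.log ((q (z, y) / qZ z) / p z y)) +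
        (∑ z, ∑ y, q (z, y) * Real.log (p z y)) +
        -∑ y, qY y * Real.log (qY y) :=
  mutualInfo_eq_expected_klDiv_add_loglik_add_entropy_general q hq qZ hqZ qY hqY p hp
end

section
/- Let Z and Y be nonempty finite types and let q : Z × Y → ℝ be a strictly positive probability mass function with marginals qZ z = ∑_y q(z,y) and qY y = ∑_z q(z,y). Let p : Z → Y → ℝ satisfy p z y > 0 and ∑_y p z y = 1 for every z. Then the mutual information I = ∑_{z,y} q(z,y) · Real.log (q(z,y) / (qZ z · qY y)) satisfies I ≥ ∑_{z,y} q(z,y) · Real.log (p z y) + H(Y), where H(Y) = −∑_y qY y · Real.log (qY y). Equivalently, I(Z;Y) ≥ H(Y) − H(q, p) where H(q, p) = −∑_{z,y} q(z,y)·log(p z y) is the cross-entropy loss of the classifier p. -/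
/-!
The gap between the two sides is the Kullback–Leibler divergence of `q` from the joint law
`qZ z · p z y`: splitting `log (q / (qZ · qY)) = log (q / (qZ · p)) + log p - log qY` turns the
mutual information into that divergence plus `E_q[log p] + H(Y)`. Since `p z` sums to one, both
laws have the same total mass, so the divergence is nonnegative by `a - b ≤ a log (a / b)`.
-/

open Finset Real

namespace Real

lemma sub_le_mul_log_div {a b : ℝ} (ha : 0 < a) (hb : 0 < b) : a - b ≤ a * log (a / b) := by
  calc a - b = a * (1 - (a / b)⁻¹) := by field_simp
    _ ≤ a * log (a / b) := by gcongr; exact one_sub_inv_le_log_of_pos (div_pos ha hb)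

lemma sum_sub_sum_le_sum_mul_log_div {ι : Type*} (s : Finset ι) {a b : ι → ℝ}
    (ha : ∀ i ∈ s, 0 < a i) (hb : ∀ i ∈ s, 0 < b i) :
    ∑ i ∈ s, a i - ∑ i ∈ s, b i ≤ ∑ i ∈ s, a i * log (a i / b i) := by
  rw [← sum_sub_distrib]
  exact sum_le_sum fun i hi ↦ sub_le_mul_log_div (ha i hi) (hb i hi)

lemma log_div_mul_eq {a b c d : ℝ} (ha : a ≠ 0) (hb : b ≠ 0) (hc : c ≠ 0) (hd : d ≠ 0) :
    log (a / (b * c)) = log (a / (b * d)) + log d - log c := by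
  rw [log_div ha (mul_ne_zero hb hc), log_div ha (mul_ne_zero hb hd), log_mul hb hc,
    log_mul hb hd]
  ring

end Real

theorem mutualInfo_ge_loglik_add_entropy_general
    {Z Y : Type*} [Fintype Z] [Fintype Y]
    (q : Z × Y → ℝ) (hq : ∀ zy, 0 < q zy)
    (qZ : Z → ℝ) (hqZ : ∀ z, qZ z = ∑ y, q (z, y))
    (qY : Y → ℝ) (hqY : ∀ y, qY y = ∑ z, q (z, y))
    (p : Z → Y → ℝ) (hp : ∀ z y, 0 < p z y) (hp1 : ∀ z, ∑ y, p z y = 1) :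
    (∑ z, ∑ y, q (z, y) * Real.log (q (z, y) / (qZ z * qY y))) ≥
      (∑ z, ∑ y, q (z, y) * Real.log (p z y)) + -∑ y, qY y * Real.log (qY y) := by
  have hqZ_pos : ∀ z y, 0 < qZ z := fun z y ↦ by
    rw [hqZ]
    exact (hq (z, y)).trans_le (single_le_sum (fun y _ ↦ (hq (z, y)).le) (mem_univ y))
  have hqY_pos : ∀ z y, 0 < qY y := fun z y ↦ by
    rw [hqY]
    exact (hq (z, y)).trans_le (single_le_sum (fun z _ ↦ (hq (z, y)).le) (mem_univ z))
  have split : ∀ z y, q (z, y) * log (q (z, y) / (qZ z * qY y)) =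
      q (z, y) * log (q (z, y) / (qZ z * p z y)) + q (z, y) * log (p z y)
        - q (z, y) * log (qY y) := fun z y ↦ by
    rw [log_div_mul_eq (hq _).ne' (hqZ_pos z y).ne' (hqY_pos z y).ne' (hp z y).ne']
    ring
  have entropy : ∑ z, ∑ y, q (z, y) * log (qY y) = ∑ y, qY y * log (qY y) := by
    rw [sum_comm]
    simp_rw [← sum_mul, hqY]
  have mass : ∑ z, ∑ y, qZ z * p z y = ∑ z, ∑ y, q (z, y) := by
    simp_rw [← mul_sum, hp1, mul_one, hqZ]
  have gibbs : ∑ z, ∑ y, q (z, y) - ∑ z, ∑ y, qZ z * p z y ≤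
      ∑ z, ∑ y, q (z, y) * log (q (z, y) / (qZ z * p z y)) := by
    simpa only [Fintype.sum_prod_type] using sum_sub_sum_le_sum_mul_log_div univ
      (fun zy _ ↦ hq zy) (fun zy _ ↦ mul_pos (hqZ_pos zy.1 zy.2) (hp zy.1 zy.2))
  simp_rw [split, sum_sub_distrib, sum_add_distrib, entropy]
  linarith

/-- Variational lower bound on mutual information:
`I(Z;Y) ≥ E_q[log p(y|z)] + H(Y)`, i.e. `I(Z;Y) ≥ H(Y) − H(q, p)` where `H(q, p)` is the
cross-entropy loss of the classifier `p`. -/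
theorem mutualInfo_ge_loglik_add_entropy
    {Z Y : Type*} [Fintype Z] [Fintype Y] [Nonempty Z] [Nonempty Y]
    (q : Z × Y → ℝ) (hq : ∀ zy, 0 < q zy) (hq1 : ∑ zy : Z × Y, q zy = 1)
    (qZ : Z → ℝ) (hqZ : ∀ z, qZ z = ∑ y, q (z, y))
    (qY : Y → ℝ) (hqY : ∀ y, qY y = ∑ z, q (z, y))
    (p : Z → Y → ℝ) (hp : ∀ z y, 0 < p z y) (hp1 : ∀ z, ∑ y, p z y = 1) :
    (∑ z, ∑ y, q (z, y) * Real.log (q (z, y) / (qZ z * qY y))) ≥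
      (∑ z, ∑ y, q (z, y) * Real.log (p z y)) + -∑ y, qY y * Real.log (qY y) :=
  mutualInfo_ge_loglik_add_entropy_general q hq qZ hqZ qY hqY p hp hp1
end

section
/- Let (α, 𝓐) be a measurable space, Q a measure on α, f : α → ℝ a measurable nonnegative function, and let P = Q.withDensity (fun z => ENNReal.ofReal (f z)). Let ε ≥ 0 and δ ≥ 0. If P {z | f z > Real.exp ε} ≤ ENNReal.ofReal δ, then for every measurable set S ⊆ α, P S ≤ ENNReal.ofReal (Real.exp ε) * Q S + ENNReal.ofReal δ. -/
open MeasureTheory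

open scoped ENNReal

theorem MeasureTheory.withDensity_apply_le_mul_add {α : Type*} [MeasurableSpace α] {μ : Measure α}
    {g : α → ℝ≥0∞} {c : ℝ≥0∞} {s A : Set α} (hs : MeasurableSet s) (hA : MeasurableSet A)
    (hg : ∀ z ∉ A, g z ≤ c) :
    μ.withDensity g s ≤ c * μ s + μ.withDensity g A := by
  have hoff : μ.withDensity g (s \ A) ≤ c * μ s :=
    calc μ.withDensity g (s \ A) = ∫⁻ z in s \ A, g z ∂μ := withDensity_apply _ (hs.diff hA)
      _ ≤ ∫⁻ _ in s \ A, c ∂μ := setLIntegral_mono' (hs.diff hA) fun z hz => hg z hz.2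
      _ = c * μ (s \ A) := setLIntegral_const _ _
      _ ≤ c * μ s := by gcongr; exact Set.sdiff_subset
  calc μ.withDensity g s ≤ μ.withDensity g (s ∩ A) + μ.withDensity g (s \ A) :=
        measure_le_inter_add_sdiff _ _ _
    _ ≤ μ.withDensity g A + c * μ s := add_le_add (measure_mono Set.inter_subset_right) hoff
    _ = c * μ s + μ.withDensity g A := add_comm _ _

theorem dp_of_likelihood_ratio_bound_general {α : Type*} [MeasurableSpace α] (Q : Measure α)
    (f : α → ℝ) (hf : Measurable f) (P : Measure α)
    (hP : P = Q.withDensity fun z => ENNReal.ofReal (f z))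
    (ε δ : ℝ)
    (h : P {z | Real.exp ε < f z} ≤ ENNReal.ofReal δ) :
    ∀ S : Set α, MeasurableSet S →
      P S ≤ ENNReal.ofReal (Real.exp ε) * Q S + ENNReal.ofReal δ := by
  intro S hS
  subst hP
  have hA : MeasurableSet {z | Real.exp ε < f z} := measurableSet_lt measurable_const hf
  refine (withDensity_apply_le_mul_add hS hA fun z hz => ?_).trans (add_le_add_right h _)
  exact ENNReal.ofReal_le_ofReal (not_lt.mp hz)

/-- If, with `P = Q.withDensity f`, the likelihood ratio `f` exceeds `e^ε` with `P`-probability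
at most `δ`, then `P S ≤ e^ε · Q S + δ` for every measurable `S`
(the `(ε, δ)`-differential privacy inequality). -/
theorem dp_of_likelihood_ratio_bound {α : Type*} [MeasurableSpace α] (Q : Measure α)
    (f : α → ℝ) (hf : Measurable f) (hf0 : ∀ z, 0 ≤ f z) (P : Measure α)
    (hP : P = Q.withDensity fun z => ENNReal.ofReal (f z))
    (ε δ : ℝ) (hε : 0 ≤ ε) (hδ : 0 ≤ δ)
    (h : P {z | Real.exp ε < f z} ≤ ENNReal.ofReal δ) :
    ∀ S : Set α, MeasurableSet S →
      P S ≤ ENNReal.ofReal (Real.exp ε) * Q S + ENNReal.ofReal δ :=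
  dp_of_likelihood_ratio_bound_general Q f hf P hP ε δ h
end
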